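/- arXiv:2505.18387 — 6 statements merged into one kernel-verified Lean document; each statement's English description precedes it below -/
import Mathlib

section
/- Let $n, r \ge 1$, let $\varphi, \varphi' : \mathbb{C} \to \mathbb{C}^n$ and $\gamma' : \mathbb{C} \to \mathbb{C}^r$ be functions, let $x, x' \in \mathbb{C}^n$, and let $w_1, \dots, w_n \in \mathbb{C}^r$. Suppose that, as $t \to 0$ along $t \ne 0$: $\varphi(t) \to x$, $\varphi'(t) \to x'$, and for each $\ell \in \{1,\dots,n\}$, $(\varphi_\ell(t) - \varphi'_\ell(t))\, \gamma'(t) \to w_\ell$. If $x_i \ne x'_i$ for some index $i$, then for every $j \in \{1,\dots,n\}$ one has $w_j = \dfrac{x_j - x'_j}{x_i - x'_i}\, w_i$. -/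
open Filter Topology

/-- Lemma 2.4(b) of the paper. -/
theorem stmt_4 (n r : ℕ) (hn : 1 ≤ n) (hr : 1 ≤ r)
    (φ φ' : ℂ → Fin n → ℂ) (γ' : ℂ → Fin r → ℂ)
    (x x' : Fin n → ℂ) (w : Fin n → Fin r → ℂ)
    (hφ : Tendsto φ (𝓝[≠] (0:ℂ)) (𝓝 x))
    (hφ' : Tendsto φ' (𝓝[≠] (0:ℂ)) (𝓝 x'))
    (hw : ∀ ℓ : Fin n,
      Tendsto (fun t => (φ t ℓ - φ' t ℓ) • γ' t) (𝓝[≠] (0:ℂ)) (𝓝 (w ℓ)))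
    (i : Fin n) (hi : x i ≠ x' i) :
    ∀ j : Fin n, w j = ((x j - x' j) / (x i - x' i)) • w i := by
  intro j
  have hsub : x i - x' i ≠ 0 := sub_ne_zero.mpr hi
  have hφi : Tendsto (fun t => φ t i - φ' t i) (𝓝[≠] (0:ℂ)) (𝓝 (x i - x' i)) :=
    ((continuous_apply i).continuousAt.tendsto.comp hφ).sub
      ((continuous_apply i).continuousAt.tendsto.comp hφ')
  have hφj : Tendsto (fun t => φ t j - φ' t j) (𝓝[≠] (0:ℂ)) (𝓝 (x j - x' j)) :=
    ((continuous_apply j).continuousAt.tendsto.comp hφ).sub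
      ((continuous_apply j).continuousAt.tendsto.comp hφ')
  have hne : ∀ᶠ t in 𝓝[≠] (0:ℂ), φ t i - φ' t i ≠ 0 :=
    hφi (isOpen_ne.mem_nhds hsub)
  have hdiv : Tendsto (fun t => (φ t j - φ' t j) / (φ t i - φ' t i)) (𝓝[≠] (0:ℂ))
      (𝓝 ((x j - x' j) / (x i - x' i))) := hφj.div hφi hsub
  have hlim : Tendsto
      (fun t => ((φ t j - φ' t j) / (φ t i - φ' t i)) • ((φ t i - φ' t i) • γ' t))
      (𝓝[≠] (0:ℂ)) (𝓝 (((x j - x' j) / (x i - x' i)) • w i)) :=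
    hdiv.smul (hw i)
  have heq : ∀ᶠ t in 𝓝[≠] (0:ℂ),
      ((φ t j - φ' t j) / (φ t i - φ' t i)) • ((φ t i - φ' t i) • γ' t)
        = (φ t j - φ' t j) • γ' t := by
    filter_upwards [hne] with t ht
    rw [smul_smul, div_mul_cancel₀ _ ht]
  exact tendsto_nhds_unique (hw j) (hlim.congr' heq)
end

section
/- Let $n, r \ge 1$, let $\varphi, \varphi' : \mathbb{C} \to \mathbb{C}^n$ and $\gamma, \gamma' : \mathbb{C} \to \mathbb{C}^r$ be functions, let $x, x' \in \mathbb{C}^n$, let $v, w_1, \dots, w_n \in \mathbb{C}^r$ with $(v, w_1, \dots, w_n) \ne 0$, and let $i$ be an index with $x_i \ne x'_i$. Suppose that, as $t \to 0$ along $t \ne 0$: $\varphi(t) \to x$, $\varphi'(t) \to x'$, $\gamma(t) + \gamma'(t) \to v$, and for each $\ell$, $(\varphi_\ell(t) - \varphi'_\ell(t))\, \gamma'(t) \to w_\ell$. Then $(\gamma(t), \gamma'(t))$ converges to the vector $\Big(v - \dfrac{w_i}{x_i - x'_i},\ \dfrac{w_i}{x_i - x'_i}\Big) \in \mathbb{C}^r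 \times \mathbb{C}^r$, this limit vector is nonzero, and it is the scalar multiple $\dfrac{1}{x_i - x'_i}\big((x_i - x'_i)v - w_i,\ w_i\big)$, hence spans the same complex line as $((x_i - x'_i)v - w_i,\ w_i)$. -/
open Filter Topology

/-- Lemma 2.4(a) of the paper (analytic content). -/
theorem stmt_5 (n r : ℕ) (hn : 1 ≤ n) (hr : 1 ≤ r)
    (φ φ' : ℂ → Fin n → ℂ) (γ γ' : ℂ → Fin r → ℂ)
    (x x' : Fin n → ℂ) (v : Fin r → ℂ) (w : Fin n → Fin r → ℂ)
    (hvw : ((v, w) : (Fin r → ℂ) × (Fin n → Fin r → ℂ)) ≠ 0)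
    (i : Fin n) (hi : x i ≠ x' i)
    (hφ : Tendsto φ (𝓝[≠] (0:ℂ)) (𝓝 x))
    (hφ' : Tendsto φ' (𝓝[≠] (0:ℂ)) (𝓝 x'))
    (hγ : Tendsto (fun t => γ t + γ' t) (𝓝[≠] (0:ℂ)) (𝓝 v))
    (hw : ∀ ℓ : Fin n,
      Tendsto (fun t => (φ t ℓ - φ' t ℓ) • γ' t) (𝓝[≠] (0:ℂ)) (𝓝 (w ℓ))) :
    Tendsto (fun t => ((γ t, γ' t) : (Fin r → ℂ) × (Fin r → ℂ))) (𝓝[≠] (0:ℂ))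
      (𝓝 (v - (x i - x' i)⁻¹ • w i, (x i - x' i)⁻¹ • w i)) ∧
    ((v - (x i - x' i)⁻¹ • w i, (x i - x' i)⁻¹ • w i) :
      (Fin r → ℂ) × (Fin r → ℂ)) ≠ 0 ∧
    ((v - (x i - x' i)⁻¹ • w i, (x i - x' i)⁻¹ • w i) :
      (Fin r → ℂ) × (Fin r → ℂ)) =
      (x i - x' i)⁻¹ • (((x i - x' i) • v - w i, w i) : (Fin r → ℂ) × (Fin r → ℂ)) := by
  have hne : x i - x' i ≠ 0 := sub_ne_zero.mpr hi
  have hd : Tendsto (fun t => φ t i - φ' t i) (𝓝[≠] (0:ℂ)) (𝓝 (x i - x' i)) :=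
    (tendsto_pi_nhds.mp hφ i).sub (tendsto_pi_nhds.mp hφ' i)
  have hγ' : Tendsto γ' (𝓝[≠] (0:ℂ)) (𝓝 ((x i - x' i)⁻¹ • w i)) := by
    have h1 : Tendsto (fun t => (φ t i - φ' t i)⁻¹ • ((φ t i - φ' t i) • γ' t))
        (𝓝[≠] (0:ℂ)) (𝓝 ((x i - x' i)⁻¹ • w i)) := (hd.inv₀ hne).smul (hw i)
    refine h1.congr' ?_
    filter_upwards [hd.eventually_ne hne] with t ht
    exact inv_smul_smul₀ ht _
  have hγt : Tendsto γ (𝓝[≠] (0:ℂ)) (𝓝 (v - (x i - x' i)⁻¹ • w i)) := by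
    have := hγ.sub hγ'
    simpa using this
  refine ⟨hγt.prodMk_nhds hγ', ?_, ?_⟩
  · intro h0
    have h1 : v - (x i - x' i)⁻¹ • w i = 0 := congrArg Prod.fst h0
    have h2 : (x i - x' i)⁻¹ • w i = 0 := congrArg Prod.snd h0
    have hwi : w i = 0 := by
      have := smul_eq_zero.mp h2
      rcases this with h | h
      · exact absurd h (inv_ne_zero hne)
      · exact h
    have hv : v = 0 := by rw [h2] at h1; simpa using h1
    have hγ'0 : Tendsto γ' (𝓝[≠] (0:ℂ)) (𝓝 0) := by
      rw [hwi] at hγ'; simpa using hγ'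
    have hwl : ∀ ℓ : Fin n, w ℓ = 0 := by
      intro ℓ
      have h3 : Tendsto (fun t => (φ t ℓ - φ' t ℓ) • γ' t) (𝓝[≠] (0:ℂ))
          (𝓝 ((x ℓ - x' ℓ) • (0 : Fin r → ℂ))) :=
        ((tendsto_pi_nhds.mp hφ ℓ).sub (tendsto_pi_nhds.mp hφ' ℓ)).smul hγ'0
      have := tendsto_nhds_unique (hw ℓ) h3
      simpa using this
    exact hvw (by
      refine Prod.ext hv (funext fun ℓ => hwl ℓ))
  · refine Prod.ext ?_ ?_
    · show v - (x i - x' i)⁻¹ • w i = (x i - x' i)⁻¹ • ((x i - x' i) • v - w i)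
      rw [smul_sub, smul_smul, inv_mul_cancel₀ hne, one_smul]
    · show (x i - x' i)⁻¹ • w i = (x i - x' i)⁻¹ • w i
      rfl
end

section
/- Let $n, r \ge 1$, let $x, x' \in \mathbb{C}^n$, and let $i$ be an index with $x_i \ne x'_i$. Define maps $\Gamma : \mathbb{C}^r \times \mathbb{C}^r \to \mathbb{C}^r \times (\mathrm{Fin}\; n \to \mathbb{C}^r)$ by $\Gamma(u, u') = \big(u + u',\ ((x_j - x'_j)u')_{j=1}^n\big)$ and $\Lambda : \mathbb{C}^r \times (\mathrm{Fin}\; n \to \mathbb{C}^r) \to \mathbb{C}^r \times \mathbb{C}^r$ by $\Lambda(v, (w_j)_j) = \big((x_i - x'_i)v - w_i,\ w_i\big)$. Then: (a) for every $(u, u')$, $\Lambda(\Gamma(u, u')) = (x_i - x'_i) \cdot (u, u')$; and (b) for every $(v, (w_j)_j)$ satisfying $(x_i - x'_i) w_j = (x_j - x'_j) w_i$ for all $j$, one has $\Gamma(\Lambda(v, (w_j)_j)) = (x_i - x'_i) \cdot (v, (w_j)_j)$. In particular, since $x_i - x'_i \ne 0$, $\Gamma$ and $\Lambda$ induce mutually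 inverse maps on the corresponding sets of complex lines. -/
/-- The map `Γ` of Theorem 2.6(a): `(u, u') ↦ (u + u', ((xⱼ - x'ⱼ)u')ⱼ)`. -/
noncomputable def GammaMap (n r : ℕ) (x x' : Fin n → ℂ)
    (P : (Fin r → ℂ) × (Fin r → ℂ)) : (Fin r → ℂ) × (Fin n → Fin r → ℂ) :=
  (P.1 + P.2, fun j => (x j - x' j) • P.2)

/-- The map `Λ` of Theorem 2.6(a): `(v, (wⱼ)ⱼ) ↦ ((xᵢ - x'ᵢ)v - wᵢ, wᵢ)`. -/
noncomputable def LambdaMap (n r : ℕ) (x x' : Fin n → ℂ) (i : Fin n)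
    (Q : (Fin r → ℂ) × (Fin n → Fin r → ℂ)) : (Fin r → ℂ) × (Fin r → ℂ) :=
  ((x i - x' i) • Q.1 - Q.2 i, Q.2 i)

/-- Theorem 2.6(a) of the paper (algebraic content): `Λ ∘ Γ` and `Γ ∘ Λ` are scalar
multiplication by `xᵢ - x'ᵢ ≠ 0`, so `Γ` and `Λ` induce mutually inverse maps on lines. -/
theorem stmt_8 (n r : ℕ) (hn : 1 ≤ n) (hr : 1 ≤ r)
    (x x' : Fin n → ℂ) (i : Fin n) (hi : x i ≠ x' i) :
    (∀ P : (Fin r → ℂ) × (Fin r → ℂ),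
      LambdaMap n r x x' i (GammaMap n r x x' P) = (x i - x' i) • P) ∧
    (∀ Q : (Fin r → ℂ) × (Fin n → Fin r → ℂ),
      (∀ j : Fin n, (x i - x' i) • Q.2 j = (x j - x' j) • Q.2 i) →
      GammaMap n r x x' (LambdaMap n r x x' i Q) = (x i - x' i) • Q) := by
  constructor
  · intro P
    simp only [LambdaMap, GammaMap, Prod.smul_mk, smul_add]
    ext <;> simp [Prod.smul_def] <;> ring
  · intro Q hQ
    simp only [GammaMap, LambdaMap]
    ext
    · simp [Prod.smul_def]
    · next j k =>
      have := congrFun (hQ j) k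
      simp [Prod.smul_def, smul_sub, smul_smul] at this ⊢
      rw [mul_comm] at this
      linear_combination -this
end

section
/- Let $n \ge 1$, let $k, r \ge 1$ be natural numbers, let $\tau, \mu \in \mathbb{C}^n$, and let $g : \mathbb{C} \to \mathbb{C}^n$ satisfy $g(t) - \tau t^k - \mu t^{k+r} = o(t^{k+r})$ as $t \to 0$. Let $c \in \mathbb{C} \setminus \{0\}$ and let $\varphi : \mathbb{C} \to \mathbb{C}$ satisfy $\varphi(t) - c t = o(t)$ as $t \to 0$. Then $$\frac{1}{t^{k+r}}\Big(g(\varphi(t)) - \frac{\varphi(t)^k}{t^k}\, g(t)\Big) \longrightarrow c^k (c^r - 1)\, \mu$$ as $t \to 0$ along $t \ne 0$. In particular, if $\mu \ne 0$ and $c^r \ne 1$, the limit is a nonzero multiple of $\mu$. -/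
/-!
Write `g x = x ^ k • τ + x ^ (k + r) • μ + e x` with `e x = o(x ^ (k + r))` and put `q = φ t / t → c`.
Rescaling `g t` by `(φ t / t) ^ k` makes the leading `τ`-terms cancel exactly, leaving
`(q ^ k * (q ^ r - 1)) • μ` plus the remainders `e (φ t)` and `e t`, each divided by the matching
power; these vanish in the limit because `φ` maps the punctured neighbourhood of `0` to itself.
-/

open Filter Asymptotics Topology

section Reparametrization

variable {𝕜 : Type*} [NontriviallyNormedField 𝕜] {φ : 𝕜 → 𝕜} {c : 𝕜}

theorem tendsto_div_self_of_isLittleO_sub_mul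
    (hφ : (fun t => φ t - c * t) =o[𝓝[≠] (0 : 𝕜)] fun t => t) :
    Tendsto (fun t => φ t / t) (𝓝[≠] 0) (𝓝 c) := by
  have h : Tendsto (fun t => (φ t - c * t) / t + c) (𝓝[≠] 0) (𝓝 (0 + c)) :=
    hφ.tendsto_div_nhds_zero.add tendsto_const_nhds
  rw [zero_add] at h
  refine h.congr' ?_
  filter_upwards [self_mem_nhdsWithin] with t (ht : t ≠ 0)
  rw [sub_div, mul_div_cancel_right₀ c ht, sub_add_cancel]

theorem tendsto_nhdsNE_of_isLittleO_sub_mul (hc : c ≠ 0)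
    (hφ : (fun t => φ t - c * t) =o[𝓝[≠] (0 : 𝕜)] fun t => t) :
    Tendsto φ (𝓝[≠] 0) (𝓝[≠] 0) := by
  have hq := tendsto_div_self_of_isLittleO_sub_mul hφ
  have hne : ∀ᶠ t in 𝓝[≠] 0, φ t ≠ 0 := by
    filter_upwards [hq.eventually_ne hc] with t h h0
    exact h (by rw [h0, zero_div])
  refine tendsto_nhdsWithin_iff.mpr ⟨?_, hne⟩
  have h : Tendsto (fun t => φ t / t * t) (𝓝[≠] 0) (𝓝 (c * 0)) :=
    hq.mul (tendsto_nhdsWithin_of_tendsto_nhds tendsto_id)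
  rw [mul_zero] at h
  refine h.congr' ?_
  filter_upwards [self_mem_nhdsWithin] with t (ht : t ≠ 0)
  exact div_mul_cancel₀ (φ t) ht

end Reparametrization

theorem inv_pow_smul_sub_div_pow_smul {K E : Type*} [Field K] [AddCommGroup E] [Module K E]
    (k r : ℕ) {s t : K} (hs : s ≠ 0) (ht : t ≠ 0) (τ μ es et : E) :
    (t ^ (k + r))⁻¹ • ((s ^ k • τ + s ^ (k + r) • μ + es)
        - (s ^ k / t ^ k) • (t ^ k • τ + t ^ (k + r) • μ + et)) =
      ((s / t) ^ k * ((s / t) ^ r - 1)) • μ + (s / t) ^ (k + r) • ((s ^ (k + r))⁻¹ • es)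
        - (s / t) ^ k • ((t ^ (k + r))⁻¹ • et) := by
  simp only [div_pow, pow_add]
  match_scalars <;> field_simp
  ring

theorem tendsto_inv_pow_smul_sub_div_pow_smul {𝕜 E : Type*} [NontriviallyNormedField 𝕜]
    [NormedAddCommGroup E] [NormedSpace 𝕜 E] {k r : ℕ} {τ μ : E} {g : 𝕜 → E}
    (hg : (fun t => g t - t ^ k • τ - t ^ (k + r) • μ) =o[𝓝[≠] (0 : 𝕜)] fun t => t ^ (k + r))
    {c : 𝕜} (hc : c ≠ 0) {φ : 𝕜 → 𝕜}
    (hφ : (fun t => φ t - c * t) =o[𝓝[≠] (0 : 𝕜)] fun t => t) :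
    Tendsto (fun t => (t ^ (k + r))⁻¹ • (g (φ t) - (φ t ^ k / t ^ k) • g t))
      (𝓝[≠] 0) (𝓝 ((c ^ k * (c ^ r - 1)) • μ)) := by
  set e := fun t => g t - t ^ k • τ - t ^ (k + r) • μ
  have hq := tendsto_div_self_of_isLittleO_sub_mul hφ
  have hφ0 := tendsto_nhdsNE_of_isLittleO_sub_mul hc hφ
  have hE : Tendsto (fun t => (t ^ (k + r))⁻¹ • e t) (𝓝[≠] 0) (𝓝 0) :=
    hg.tendsto_inv_smul_nhds_zero
  have hT := (((hq.pow k).mul ((hq.pow r).sub_const 1)).smul_const μ).add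
    ((hq.pow (k + r)).smul (hE.comp hφ0)) |>.sub ((hq.pow k).smul hE)
  rw [smul_zero, smul_zero, add_zero, sub_zero] at hT
  refine hT.congr' ?_
  filter_upwards [self_mem_nhdsWithin, hφ0 self_mem_nhdsWithin]
    with t (ht : t ≠ 0) (hs : φ t ≠ 0)
  have hdecomp : ∀ x, g x = x ^ k • τ + x ^ (k + r) • μ + e x := fun x => by
    simp only [e]; abel
  rw [hdecomp (φ t), hdecomp t, inv_pow_smul_sub_div_pow_smul k r hs ht]
  rfl

theorem stmt_9_general (n : ℕ) (k r : ℕ)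
    (τ μ : Fin n → ℂ) (g : ℂ → Fin n → ℂ)
    (hg : (fun t => g t - t ^ k • τ - t ^ (k + r) • μ)
      =o[𝓝[≠] (0:ℂ)] fun t => t ^ (k + r))
    (c : ℂ) (hc : c ≠ 0) (φ : ℂ → ℂ)
    (hφ : (fun t => φ t - c * t) =o[𝓝[≠] (0:ℂ)] fun t => t) :
    Tendsto (fun t => (t ^ (k + r))⁻¹ • (g (φ t) - (φ t ^ k / t ^ k) • g t))
      (𝓝[≠] (0:ℂ)) (𝓝 ((c ^ k * (c ^ r - 1)) • μ)) ∧
    (μ ≠ 0 → c ^ r ≠ 1 → (c ^ k * (c ^ r - 1)) • μ ≠ 0) :=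
  ⟨tendsto_inv_pow_smul_sub_div_pow_smul hg hc hφ, fun hμ hcr =>
    smul_ne_zero (mul_ne_zero (pow_ne_zero k hc) (sub_ne_zero.mpr hcr)) hμ⟩

/-- The key limit computation in the proof of Theorem 3.2 of the paper. -/
theorem stmt_9 (n : ℕ) (hn : 1 ≤ n) (k r : ℕ) (hk : 1 ≤ k) (hr : 1 ≤ r)
    (τ μ : Fin n → ℂ) (g : ℂ → Fin n → ℂ)
    (hg : (fun t => g t - t ^ k • τ - t ^ (k + r) • μ)
      =o[𝓝[≠] (0:ℂ)] fun t => t ^ (k + r))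
    (c : ℂ) (hc : c ≠ 0) (φ : ℂ → ℂ)
    (hφ : (fun t => φ t - c * t) =o[𝓝[≠] (0:ℂ)] fun t => t) :
    Tendsto (fun t => (t ^ (k + r))⁻¹ • (g (φ t) - (φ t ^ k / t ^ k) • g t))
      (𝓝[≠] (0:ℂ)) (𝓝 ((c ^ k * (c ^ r - 1)) • μ)) ∧
    (μ ≠ 0 → c ^ r ≠ 1 → (c ^ k * (c ^ r - 1)) • μ ≠ 0) :=
  stmt_9_general n k r τ μ g hg c hc φ hφ
end

section
/- Let $n, B_1$ be natural numbers with $2 \le n$ and $B_1 > 2n$, and set $s := B_1 - 2n + 1$. Let $c, d \in \mathbb{C}$ with $c^n = 1$ and $c^{B_1 - n} \ne 1$, and define $\varphi(t) := c t + d t^s$. Let $q, \eta_2 : \mathbb{C} \to \mathbb{C}$ satisfy $q(t) - \tfrac{B_1}{n} t^{B_1 - n} = o(t^{B_1 - n})$ and $\eta_2(t) - t^{B_1} = o(t^{B_1})$ as $t \to 0$. For $(A, B) \in \mathbb{C}^2$ define $$W(t) := A\, t^{B_1 - n}\, \big(-q(t),\ 1,\ 0,\ 0\big) + B\, \big(q(t)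 - q(\varphi(t)),\ 0,\ t^n - \varphi(t)^n,\ \eta_2(t) - \eta_2(\varphi(t))\big) \in \mathbb{C}^4.$$ Then $$\frac{1}{t^{B_1 - n}}\, W(t) \longrightarrow \Big(B\,\tfrac{B_1}{n}\,(1 - c^{B_1 - n}),\ A,\ -n\, c^{n-1}\, d\, B,\ 0\Big)$$ as $t \to 0$ along $t \ne 0$; moreover if $(A,B) \ne (0,0)$ this limit vector is nonzero (and its last coordinate is zero). -/
open Filter Asymptotics Topology

/-!
Write `φ t = t * r t` with `r t = c + d * t ^ (s - 1) → c ≠ 0`. An asymptotic `f t ~ a * t ^ k`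
transfers along `φ` to `f (φ t) ~ a * c ^ k * t ^ k`; this gives the first coordinate
`a * (1 - c ^ k)` and shows that the `η₂`-difference is `O(t ^ B₁) = o(t ^ (B₁ - n))`.
The third coordinate equals `(1 - r t ^ n) / t ^ (s - 1)`, a difference quotient of
`u ↦ (c + d * u) ^ n` at `u = 0` (recall `c ^ n = 1`) in the variable `u = t ^ (s - 1)`.
-/

section

variable {𝕜 : Type*} [NontriviallyNormedField 𝕜]

theorem tendsto_div_pow_of_isLittleO_sub {f : 𝕜 → 𝕜} {a : 𝕜} {k : ℕ}
    (h : (fun t => f t - a * t ^ k) =o[𝓝[≠] 0] fun t => t ^ k) :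
    Tendsto (fun t => f t / t ^ k) (𝓝[≠] 0) (𝓝 a) := by
  have := h.tendsto_div_nhds_zero.add_const a
  rw [zero_add] at this
  refine this.congr' ?_
  filter_upwards [self_mem_nhdsWithin] with t (ht : t ≠ 0)
  field_simp
  ring

theorem tendsto_pow_nhdsNE_zero {m : ℕ} (hm : m ≠ 0) :
    Tendsto (fun t : 𝕜 => t ^ m) (𝓝[≠] 0) (𝓝[≠] 0) := by
  refine tendsto_nhdsWithin_iff.2 ⟨?_, ?_⟩
  · simpa [zero_pow hm] using ((continuous_pow m).tendsto (0 : 𝕜)).mono_left nhdsWithin_le_nhds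
  · filter_upwards [self_mem_nhdsWithin] with t ht using pow_ne_zero m ht

theorem tendsto_zero_of_tendsto_div_pow {f : 𝕜 → 𝕜} {a : 𝕜} {k : ℕ}
    (hf : Tendsto (fun t => f t / t ^ k) (𝓝[≠] 0) (𝓝 a)) (hk : k ≠ 0) :
    Tendsto f (𝓝[≠] 0) (𝓝 0) := by
  have := hf.mul ((tendsto_pow_nhdsNE_zero (𝕜 := 𝕜) hk).mono_right nhdsWithin_le_nhds)
  rw [mul_zero] at this
  refine this.congr' ?_
  filter_upwards [self_mem_nhdsWithin] with t (ht : t ≠ 0)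
  field_simp

section

variable {r : 𝕜 → 𝕜} {c : 𝕜}

theorem tendsto_mul_nhdsNE_zero (hr : Tendsto r (𝓝[≠] 0) (𝓝 c)) (hc : c ≠ 0) :
    Tendsto (fun t => t * r t) (𝓝[≠] 0) (𝓝[≠] 0) := by
  refine tendsto_nhdsWithin_iff.2 ⟨?_, ?_⟩
  · simpa using (tendsto_nhdsWithin_of_tendsto_nhds tendsto_id).mul hr
  · filter_upwards [self_mem_nhdsWithin, hr.eventually_ne hc] with t ht hrt
      using mul_ne_zero ht hrt

theorem tendsto_comp_mul_div_pow {f : 𝕜 → 𝕜} {a : 𝕜} {k : ℕ}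
    (hf : Tendsto (fun t => f t / t ^ k) (𝓝[≠] 0) (𝓝 a))
    (hr : Tendsto r (𝓝[≠] 0) (𝓝 c)) (hc : c ≠ 0) :
    Tendsto (fun t => f (t * r t) / t ^ k) (𝓝[≠] 0) (𝓝 (a * c ^ k)) := by
  refine ((hf.comp (tendsto_mul_nhdsNE_zero hr hc)).mul (hr.pow k)).congr' ?_
  filter_upwards [hr.eventually_ne hc] with t hrt
  simp only [Function.comp_apply, mul_pow]
  field_simp

theorem tendsto_sub_comp_mul_div_pow {f : 𝕜 → 𝕜} {a : 𝕜} {k : ℕ}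
    (hf : Tendsto (fun t => f t / t ^ k) (𝓝[≠] 0) (𝓝 a))
    (hr : Tendsto r (𝓝[≠] 0) (𝓝 c)) (hc : c ≠ 0) :
    Tendsto (fun t => (f t - f (t * r t)) / t ^ k) (𝓝[≠] 0) (𝓝 (a * (1 - c ^ k))) := by
  simpa only [sub_div, mul_sub, mul_one] using hf.sub (tendsto_comp_mul_div_pow hf hr hc)

end

theorem tendsto_one_sub_add_mul_pow_div {n : ℕ} (c d : 𝕜) (hc : c ^ n = 1) :
    Tendsto (fun u => (1 - (c + d * u) ^ n) / u) (𝓝[≠] 0) (𝓝 (-(n * c ^ (n - 1) * d))) := by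
  have hderiv : HasDerivAt (fun u => (c + d * u) ^ n) (n * c ^ (n - 1) * d) 0 := by
    simpa using (((hasDerivAt_id (0 : 𝕜)).const_mul d).const_add c).fun_pow n
  refine (hasDerivAt_iff_tendsto_slope.1 hderiv).neg.congr fun u => ?_
  rw [slope_def_field]
  simp [hc, ← neg_div]

theorem tendsto_rescaled_generators {n m : ℕ} (hn : n ≠ 0) (hm : m ≠ 0) {c d a A B : 𝕜}
    (hc : c ^ n = 1) {φ : 𝕜 → 𝕜} (hφ : ∀ t, φ t = t * (c + d * t ^ m)) {q η : 𝕜 → 𝕜}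
    (hq : Tendsto (fun t => q t / t ^ (n + m)) (𝓝[≠] 0) (𝓝 a))
    (hη : Tendsto (fun t => η t / t ^ (n + m + n)) (𝓝[≠] 0) (𝓝 1)) :
    Tendsto (fun t => (t ^ (n + m))⁻¹ • ((A * t ^ (n + m)) • ![-q t, 1, 0, 0] +
        B • ![q t - q (φ t), 0, t ^ n - φ t ^ n, η t - η (φ t)])) (𝓝[≠] 0)
      (𝓝 ![B * a * (1 - c ^ (n + m)), A, -n * c ^ (n - 1) * d * B, 0]) := by
  obtain rfl : φ = fun t => t * (c + d * t ^ m) := funext hφ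
  have hc0 : c ≠ 0 := by rintro rfl; simp [zero_pow hn] at hc
  have hr : Tendsto (fun t : 𝕜 => c + d * t ^ m) (𝓝[≠] 0) (𝓝 c) := by
    simpa using ((tendsto_pow_nhdsNE_zero hm).mono_right nhdsWithin_le_nhds).const_mul d
      |>.const_add c
  have hlim₀ := (tendsto_zero_of_tendsto_div_pow hq (by omega)).neg.const_mul A |>.add
    ((tendsto_sub_comp_mul_div_pow hq hr hc0).const_mul B)
  have hlim₂ := ((tendsto_one_sub_add_mul_pow_div c d hc).comp
    (tendsto_pow_nhdsNE_zero hm)).const_mul B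
  have hlim₃ : Tendsto (fun t => B * ((η t - η (t * (c + d * t ^ m))) / t ^ (n + m)))
      (𝓝[≠] 0) (𝓝 (B * 0)) := by
    refine (tendsto_zero_of_tendsto_div_pow (k := n) (a := 1 * (1 - c ^ (n + m + n)))
      ?_ hn).const_mul B
    simpa only [div_div, ← pow_add] using tendsto_sub_comp_mul_div_pow hη hr hc0
  have hlim := hlim₀.matrixVecCons (tendsto_const_nhds (x := A) |>.matrixVecCons
    (hlim₂.matrixVecCons (hlim₃.matrixVecCons (tendsto_const_nhds (x := (![] : Fin 0 → 𝕜))))))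
  convert hlim.congr' ?_ using 2
  · simp only [Matrix.vecCons_inj]
    simp only [neg_zero, mul_zero, zero_add, mul_neg, and_true, true_and]
    constructor <;> ring
  · filter_upwards [self_mem_nhdsWithin] with t (ht : t ≠ 0)
    ext i
    fin_cases i <;> simp [pow_add, mul_pow] <;> field_simp

end

/-- Case A (`B₁ > 2n`) of the proof of Theorem 3.8 of the paper. -/
theorem stmt_12 (n B1 : ℕ) (hn : 2 ≤ n) (hB1 : 2 * n < B1)
    (s : ℕ) (hs : s = B1 - 2 * n + 1)
    (c d : ℂ) (hc : c ^ n = 1) (hc' : c ^ (B1 - n) ≠ 1)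
    (φ : ℂ → ℂ) (hφ : ∀ t, φ t = c * t + d * t ^ s)
    (q η2 : ℂ → ℂ)
    (hq : (fun t => q t - ((B1 : ℂ) / (n : ℂ)) * t ^ (B1 - n))
      =o[𝓝[≠] (0:ℂ)] fun t => t ^ (B1 - n))
    (hη2 : (fun t => η2 t - t ^ B1) =o[𝓝[≠] (0:ℂ)] fun t => t ^ B1)
    (A B : ℂ)
    (W : ℂ → Fin 4 → ℂ)
    (hW : ∀ t, W t =
      (A * t ^ (B1 - n)) • (![-q t, 1, 0, 0] : Fin 4 → ℂ) +
      B • (![q t - q (φ t), 0, t ^ n - φ t ^ n, η2 t - η2 (φ t)] : Fin 4 → ℂ)) :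
    Tendsto (fun t => (t ^ (B1 - n))⁻¹ • W t) (𝓝[≠] (0:ℂ))
      (𝓝 ![B * ((B1 : ℂ) / (n : ℂ)) * (1 - c ^ (B1 - n)), A,
            -(n : ℂ) * c ^ (n - 1) * d * B, 0]) ∧
    ((A, B) ≠ (0, 0) →
      (![B * ((B1 : ℂ) / (n : ℂ)) * (1 - c ^ (B1 - n)), A,
         -(n : ℂ) * c ^ (n - 1) * d * B, 0] : Fin 4 → ℂ) ≠ 0) := by
  have hn0 : n ≠ 0 := by omega
  obtain ⟨m, hm, hk⟩ : ∃ m, m ≠ 0 ∧ B1 - n = n + m := ⟨B1 - 2 * n, by omega, by omega⟩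
  have hη2' : (fun t => η2 t - 1 * t ^ (n + m + n)) =o[𝓝[≠] (0:ℂ)] fun t => t ^ (n + m + n) := by
    rw [show n + m + n = B1 by omega]
    simpa only [one_mul] using hη2
  rw [hk] at hq hc' hW ⊢
  refine ⟨?_, fun hAB hzero => hAB ?_⟩
  · have hφ' : ∀ t, φ t = t * (c + d * t ^ m) := fun t => by
      rw [hφ, hs, show B1 - 2 * n + 1 = m + 1 by omega]
      ring
    simpa only [hW] using tendsto_rescaled_generators hn0 hm hc hφ'
      (tendsto_div_pow_of_isLittleO_sub hq) (tendsto_div_pow_of_isLittleO_sub hη2')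
  · have hA : A = 0 := by simpa using congrFun hzero 1
    have hB : B = 0 := by
      have hB10 : B1 ≠ 0 := by omega
      simpa [sub_eq_zero, Ne.symm hc', hB10, hn0] using congrFun hzero 0
    simp [hA, hB]
end

section
/- Let $n \ge 1$ and let $s, r$ be natural numbers with $1 \le s < r$. Let $c, c_r \in \mathbb{C}$ with $c^n = 1$ and $c_r \ne 0$, and let $\psi : \mathbb{C} \to \mathbb{C}$ satisfy $\psi(t) - c t^s - c_r t^r = o(t^r)$ as $t \to 0$. Then $$t^{ns} - \psi(t)^n = -n\, c^{n-1}\, c_r\, t^{(n-1)s + r} + o\big(t^{(n-1)s + r}\big)$$ as $t \to 0$. -/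
open Filter Asymptotics Topology

private lemma pow_split (a b : ℕ) :
    (fun t : ℂ => t ^ (a + b)) = fun t : ℂ => t ^ a * t ^ b := by
  funext t; rw [pow_add]

private lemma aux_stmt15 (s r : ℕ) (hsr : s < r) (c cr : ℂ) (ψ : ℂ → ℂ)
    (hψ : (fun t => ψ t - c * t ^ s - cr * t ^ r) =o[𝓝[≠] (0:ℂ)] fun t => t ^ r) :
    ∀ m : ℕ,
      (fun t => ψ t ^ (m + 1) - c ^ (m + 1) * t ^ ((m + 1) * s)
          - ((m : ℂ) + 1) * c ^ m * cr * t ^ (m * s + r))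
        =o[𝓝[≠] (0:ℂ)] fun t => t ^ (m * s + r) := by
  have hrs : (fun t : ℂ => t ^ r) =o[𝓝[≠] (0:ℂ)] fun t => t ^ s :=
    (isLittleO_pow_pow hsr).mono nhdsWithin_le_nhds
  -- ψ t - c t^s = o(t^s)
  have hψs : (fun t => ψ t - c * t ^ s) =o[𝓝[≠] (0:ℂ)] fun t : ℂ => t ^ s := by
    have h1 : (fun t => ψ t - c * t ^ s - cr * t ^ r) =o[𝓝[≠] (0:ℂ)] fun t : ℂ => t ^ s :=
      hψ.trans hrs
    have h2 : (fun t : ℂ => cr * t ^ r) =o[𝓝[≠] (0:ℂ)] fun t : ℂ => t ^ s :=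
      hrs.const_mul_left cr
    have := h1.add h2
    refine this.congr_left fun t => by ring
  -- ψ = O(t^s)
  have hψO : ψ =O[𝓝[≠] (0:ℂ)] fun t : ℂ => t ^ s := by
    have h2 : (fun t : ℂ => c * t ^ s) =O[𝓝[≠] (0:ℂ)] fun t : ℂ => t ^ s :=
      (isBigO_refl _ _).const_mul_left c
    have := hψs.isBigO.add h2
    refine this.congr_left fun t => by ring
  intro m
  induction m with
  | zero => simpa using hψ
  | succ m ih =>
      have h1 : (fun t => ψ t *
          (ψ t ^ (m + 1) - c ^ (m + 1) * t ^ ((m + 1) * s)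
            - ((m : ℂ) + 1) * c ^ m * cr * t ^ (m * s + r)))
          =o[𝓝[≠] (0:ℂ)] fun t : ℂ => t ^ ((m + 1) * s + r) := by
        have := hψO.mul_isLittleO ih
        rwa [show (m + 1) * s + r = s + (m * s + r) by ring, pow_split]
      have h2 : (fun t : ℂ => c ^ (m + 1) * (t ^ ((m + 1) * s) *
          (ψ t - c * t ^ s - cr * t ^ r)))
          =o[𝓝[≠] (0:ℂ)] fun t : ℂ => t ^ ((m + 1) * s + r) := by
        have := ((isBigO_refl (fun t : ℂ => t ^ ((m + 1) * s)) _).mul_isLittleO hψ).const_mul_left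
          (c ^ (m + 1))
        rwa [pow_split]
      have h3 : (fun t : ℂ => ((m : ℂ) + 1) * c ^ m * cr * (t ^ (m * s + r) *
          (ψ t - c * t ^ s)))
          =o[𝓝[≠] (0:ℂ)] fun t : ℂ => t ^ ((m + 1) * s + r) := by
        have := ((isBigO_refl (fun t : ℂ => t ^ (m * s + r)) _).mul_isLittleO hψs).const_mul_left
          (((m : ℂ) + 1) * c ^ m * cr)
        rwa [show (m + 1) * s + r = (m * s + r) + s by ring, pow_split]
      have := (h1.add h2).add h3
      refine this.congr_left fun t => ?_
      push_cast
      ring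

/-- The leading-order computation in the general case of the proof of Theorem 3.8. -/
theorem stmt_15 (n s r : ℕ) (hn : 1 ≤ n) (hs : 1 ≤ s) (hsr : s < r)
    (c cr : ℂ) (hc : c ^ n = 1) (hcr : cr ≠ 0)
    (ψ : ℂ → ℂ)
    (hψ : (fun t => ψ t - c * t ^ s - cr * t ^ r) =o[𝓝[≠] (0:ℂ)] fun t => t ^ r) :
    (fun t => t ^ (n * s) - ψ t ^ n -
        (-(n : ℂ) * c ^ (n - 1) * cr) * t ^ ((n - 1) * s + r))
      =o[𝓝[≠] (0:ℂ)] fun t => t ^ ((n - 1) * s + r) := by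
  obtain ⟨m, rfl⟩ : ∃ m, n = m + 1 := ⟨n - 1, (Nat.succ_pred_eq_of_pos hn).symm⟩
  have h := (aux_stmt15 s r hsr c cr ψ hψ m).neg_left
  simp only [Nat.add_sub_cancel]
  refine h.congr_left fun t => ?_
  have hc' : c ^ (m + 1) = 1 := hc
  push_cast
  rw [show ((m : ℂ) + 1) * c ^ m * cr * t ^ (m * s + r) =
    ((m : ℂ) + 1) * c ^ m * cr * t ^ (m * s + r) from rfl]
  calc -(ψ t ^ (m + 1) - c ^ (m + 1) * t ^ ((m + 1) * s)
          - ((m : ℂ) + 1) * c ^ m * cr * t ^ (m * s + r))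
      = c ^ (m + 1) * t ^ ((m + 1) * s) - ψ t ^ (m + 1)
          + ((m : ℂ) + 1) * c ^ m * cr * t ^ (m * s + r) := by ring
    _ = t ^ ((m + 1) * s) - ψ t ^ (m + 1) -
          -((m : ℂ) + 1) * c ^ m * cr * t ^ (m * s + r) := by rw [hc']; ring
end
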